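/- arXiv:0904.2014 — 2 statements merged into one kernel-verified Lean document; each statement's English description precedes it below -/
import Mathlib

section
/- For a fixed predictor f and fixed n, the number of binary sequences a of length n for which f makes exactly k errors on the first n digits (i.e., (f a)_i ≠ a_i for exactly k indices i < n) equals the binomial coefficient C(n, k). -/
abbrev BinSeq := ℕ → Bool
abbrev Predictor := BinSeq → BinSeq

/-- A predictor is causal: its `n`-th output depends only on the first `n` input digits. -/
def Causal (f : Predictor) : Prop :=
  ∀ (n : ℕ) (a b : BinSeq), (∀ i, i < n → a i = b i) → f a n = f b n

/-- Extend a finite binary sequence by zeros to an infinite one. -/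
def extSeq {n : ℕ} (a : Fin n → Bool) : BinSeq :=
  fun j => if h : j < n then a ⟨j, h⟩ else false

/-!
Reading a sequence from left to right, causality makes the prediction at position `i` a
function of the digits before `i`, and whether an error occurs at `i` then fixes the digit `a i`.
So a sequence is determined by its set of error positions: `a ↦ errorSet f a` is an injection,
hence a bijection, from `{0,1}^n` onto the subsets of `Fin n`, and the sequences with `k` errors
correspond to the `k`-subsets.
-/

open Finset

theorem extSeq_eq_of_lt {n i : ℕ} {a b : Fin n → Bool} (h : ∀ j : Fin n, j.val < i → a j = b j)
    (j : ℕ) (hj : j < i) : extSeq a j = extSeq b j := by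
  unfold extSeq
  split_ifs with hjn
  · exact h ⟨j, hjn⟩ hj
  · rfl

def errorSet (f : Predictor) {n : ℕ} (a : Fin n → Bool) : Finset (Fin n) :=
  univ.filter fun i => f (extSeq a) i ≠ a i

theorem Causal.errorSet_injective {f : Predictor} (hf : Causal f) (n : ℕ) :
    Function.Injective (errorSet f (n := n)) := by
  intro a b hab
  funext i
  induction i using WellFoundedLT.induction with
  | ind i ih =>
    have hpred : f (extSeq a) i = f (extSeq b) i :=
      hf i _ _ (extSeq_eq_of_lt fun j hj => ih j hj)
    have herr : f (extSeq a) i ≠ a i ↔ f (extSeq b) i ≠ b i := by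
      simpa only [errorSet, mem_filter, mem_univ, true_and] using Finset.ext_iff.1 hab i
    rw [hpred] at herr
    revert herr; cases a i <;> cases b i <;> simp

theorem Causal.errorSet_bijective {f : Predictor} (hf : Causal f) (n : ℕ) :
    Function.Bijective (errorSet f (n := n)) :=
  (Fintype.bijective_iff_injective_and_card _).2
    ⟨hf.errorSet_injective n, by simp⟩

theorem Causal.card_errorSet_eq_choose {f : Predictor} (hf : Causal f) (n k : ℕ) :
    Nat.card {a : Fin n → Bool // #(errorSet f a) = k} = n.choose k := by
  let e : {a : Fin n → Bool // #(errorSet f a) = k} ≃ {s : Finset (Fin n) // #s = k} :=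
    (Equiv.ofBijective _ (hf.errorSet_bijective n)).subtypeEquiv fun _ => Iff.rfl
  rw [Nat.card_congr e, Nat.card_eq_fintype_card, Fintype.card_finset_len, Fintype.card_fin]

/-- For a fixed causal predictor `f` and fixed `n`, the number of binary sequences of
length `n` on which `f` makes exactly `k` errors equals `C(n, k)`. -/
theorem card_sequences_with_k_errors (f : Predictor) (hf : Causal f) (n k : ℕ) :
    Nat.card {a : Fin n → Bool //
        (Finset.univ.filter fun i : Fin n => f (extSeq a) i ≠ a i).card = k}
      = n.choose k :=
  hf.card_errorSet_eq_choose n k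
end

section
/- For every finite set F̃ of predictors and every ε > 0, there exists N and a binary sequence a of length N such that every predictor f ∈ F̃ has error rate greater than 1/2 − ε on a; moreover N can be chosen depending only on the cardinality of F̃ and on ε, uniformly over all sets of predictors of that cardinality. -/
/-- Error rate of a predictor on a finite binary sequence. -/
noncomputable def errRateFin {n : ℕ} (f : Predictor) (a : Fin n → Bool) : ℝ :=
  (∑ i : Fin n, if f (extSeq a) i = a i then (0 : ℝ) else 1) / n

/-! For a causal predictor `f`, sending a sequence to the pattern of `f`'s errors on it is injective
(the errors, read left to right, recover the bits). Hence the sequences on which `f` errs at rate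
at most `1/2 - ε` are no more numerous than the bit strings of length `N` with at most
`(1/2 - ε) N` ones, and by Chebyshev's inequality (the `±1` coordinate signs are orthogonal over the
cube) there are at most `2^N / (4 ε² N)` of those. A union bound over `p` predictors leaves a
sequence that is bad for none of them as soon as `4 ε² N > p`. -/

open scoped Finset

noncomputable def boolSign (b : Bool) : ℝ := if b then 1 else -1

lemma boolSign_mul_self (b : Bool) : boolSign b * boolSign b = 1 := by
  cases b <;> norm_num [boolSign]

lemma boolSign_not (b : Bool) : boolSign (!b) = -boolSign b := by
  cases b <;> norm_num [boolSign]

section SignSums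

variable {ι : Type*} [Fintype ι] [DecidableEq ι]

lemma sum_boolSign_mul_boolSign (i j : ι) :
    ∑ e : ι → Bool, boolSign (e i) * boolSign (e j) =
      if i = j then 2 ^ Fintype.card ι else 0 := by
  split_ifs with hij
  · subst hij
    simp [boolSign_mul_self]
  · -- flipping the `i`-th bit negates the summand
    have hflip : Function.Involutive fun e : ι → Bool => Function.update e i (!e i) :=
      fun e => by simp [Function.update_idem]
    have hneg : ∑ e : ι → Bool, boolSign (e i) * boolSign (e j)
        = -∑ e : ι → Bool, boolSign (e i) * boolSign (e j) := by
      rw [← Finset.sum_neg_distrib]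
      refine Fintype.sum_bijective _ hflip.bijective _ _ fun e => ?_
      simp [Function.update_of_ne (Ne.symm hij), boolSign_not]
    linarith

lemma sum_sq_sum_boolSign :
    ∑ e : ι → Bool, (∑ i, boolSign (e i)) ^ 2 = 2 ^ Fintype.card ι * Fintype.card ι := by
  simp_rw [sq, Finset.sum_mul_sum]
  rw [Finset.sum_comm]
  simp_rw [Finset.sum_comm (γ := ι → Bool), sum_boolSign_mul_boolSign]
  simp [mul_comm]

lemma card_sum_boolSign_le_neg_mul_sq_le (t : ℝ) (ht : 0 ≤ t) :
    #{e : ι → Bool | ∑ i, boolSign (e i) ≤ -t} * t ^ 2 ≤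
      2 ^ Fintype.card ι * Fintype.card ι := by
  calc #{e : ι → Bool | ∑ i, boolSign (e i) ≤ -t} * t ^ 2
      ≤ ∑ e ∈ {e : ι → Bool | ∑ i, boolSign (e i) ≤ -t}, (∑ i, boolSign (e i)) ^ 2 := by
        rw [← nsmul_eq_mul]
        refine Finset.card_nsmul_le_sum _ _ _ fun e he => ?_
        have he : ∑ i, boolSign (e i) ≤ -t := (Finset.mem_filter.mp he).2
        nlinarith
    _ ≤ ∑ e : ι → Bool, (∑ i, boolSign (e i)) ^ 2 :=
        Finset.sum_le_sum_of_subset_of_nonneg (Finset.subset_univ _) fun _ _ _ => sq_nonneg _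
    _ = 2 ^ Fintype.card ι * Fintype.card ι := sum_sq_sum_boolSign

end SignSums

def errPattern {N : ℕ} (f : Predictor) (a : Fin N → Bool) : Fin N → Bool :=
  fun i => f (extSeq a) i != a i

lemma extSeq_eq_of_forall_lt {N n : ℕ} {a b : Fin N → Bool}
    (h : ∀ i : Fin N, (i : ℕ) < n → a i = b i) {k : ℕ} (hk : k < n) :
    extSeq a k = extSeq b k := by
  unfold extSeq
  split_ifs with hkN
  · exact h ⟨k, hkN⟩ hk
  · rfl

lemma Causal.errPattern_injective {f : Predictor} (hf : Causal f) (N : ℕ) :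
    Function.Injective (errPattern (N := N) f) := by
  intro a b hab
  suffices h : ∀ n, ∀ i : Fin N, (i : ℕ) < n → a i = b i from
    funext fun i => h _ i i.val.lt_add_one
  intro n
  induction n with
  | zero => intro i hi; exact absurd hi (Nat.not_lt_zero _)
  | succ n ih =>
    intro i hi
    rcases Nat.lt_succ_iff_lt_or_eq.mp hi with hlt | rfl
    · exact ih i hlt
    · have hguess : f (extSeq a) i = f (extSeq b) i :=
        hf i _ _ fun k hk => extSeq_eq_of_forall_lt ih hk
      have hi := congrFun hab i
      rw [errPattern, errPattern, hguess] at hi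
      exact Bool.bne_right_inj.mp hi

lemma errRateFin_eq_sum_boolSign_errPattern {N : ℕ} (f : Predictor) (a : Fin N → Bool) :
    errRateFin f a = (N + ∑ i, boolSign (errPattern f a i)) / (2 * N) := by
  have hterm : ∀ i : Fin N, (if f (extSeq a) i = a i then (0 : ℝ) else 1)
      = (1 + boolSign (errPattern f a i)) / 2 := by
    intro i
    unfold errPattern
    cases f (extSeq a) i <;> cases a i <;> norm_num [boolSign]
  rw [errRateFin, Finset.sum_congr rfl fun i _ => hterm i, ← Finset.sum_div,
    Finset.sum_add_distrib, div_div]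
  simp

lemma sum_boolSign_errPattern_le {N : ℕ} {f : Predictor} {a : Fin N → Bool} {ε : ℝ}
    (h : errRateFin f a ≤ 1 / 2 - ε) : ∑ i, boolSign (errPattern f a i) ≤ -(2 * ε * N) := by
  rcases N.eq_zero_or_pos with rfl | hN
  · simp
  rw [errRateFin_eq_sum_boolSign_errPattern, div_le_iff₀ (by positivity)] at h
  linarith

lemma Causal.card_errRateFin_le_mul_le {f : Predictor} (hf : Causal f) (N : ℕ) {ε : ℝ}
    (hε : 0 ≤ ε) :
    #{a : Fin N → Bool | errRateFin f a ≤ 1 / 2 - ε} * (4 * ε ^ 2 * N) ≤ 2 ^ N := by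
  rcases N.eq_zero_or_pos with rfl | hN
  · simp
  have hcard : #{a : Fin N → Bool | errRateFin f a ≤ 1 / 2 - ε}
      ≤ #{e : Fin N → Bool | ∑ i, boolSign (e i) ≤ -(2 * ε * N)} :=
    Finset.card_le_card_of_injOn (errPattern f)
      (fun a ha => by simpa using sum_boolSign_errPattern_le (Finset.mem_filter.mp ha).2)
      (hf.errPattern_injective N).injOn
  have hcheb := card_sum_boolSign_le_neg_mul_sq_le (ι := Fin N) (2 * ε * N) (by positivity)
  rw [Fintype.card_fin] at hcheb
  have hcard' : (#{a : Fin N → Bool | errRateFin f a ≤ 1 / 2 - ε} : ℝ)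
      ≤ #{e : Fin N → Bool | ∑ i, boolSign (e i) ≤ -(2 * ε * N)} := by exact_mod_cast hcard
  have hN' : (0 : ℝ) < N := by exact_mod_cast hN
  refine le_of_mul_le_mul_right ?_ hN'
  calc (#{a : Fin N → Bool | errRateFin f a ≤ 1 / 2 - ε} : ℝ) * (4 * ε ^ 2 * N) * N
      ≤ #{e : Fin N → Bool | ∑ i, boolSign (e i) ≤ -(2 * ε * N)} * (2 * ε * N) ^ 2 := by
        rw [show (2 * ε * N) ^ 2 = 4 * ε ^ 2 * N * N by ring, mul_assoc]
        gcongr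
    _ ≤ (2 : ℝ) ^ N * N := hcheb

lemma exists_forall_lt_errRateFin {s : Finset Predictor} (hs : ∀ f ∈ s, Causal f) {N : ℕ}
    {ε : ℝ} (hε : 0 ≤ ε) (hN : #s < 4 * ε ^ 2 * N) :
    ∃ a : Fin N → Bool, ∀ f ∈ s, 1 / 2 - ε < errRateFin f a := by
  set bad := s.biUnion fun f => ({a : Fin N → Bool | errRateFin f a ≤ 1 / 2 - ε} : Finset _)
  have hbad : (#bad : ℝ) * (4 * ε ^ 2 * N) < 2 ^ N * (4 * ε ^ 2 * N) := by
    calc (#bad : ℝ) * (4 * ε ^ 2 * N)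
        ≤ ∑ f ∈ s, #{a : Fin N → Bool | errRateFin f a ≤ 1 / 2 - ε} * (4 * ε ^ 2 * N) := by
          rw [← Finset.sum_mul]
          gcongr
          exact_mod_cast Finset.card_biUnion_le
      _ ≤ ∑ _f ∈ s, (2 : ℝ) ^ N :=
          Finset.sum_le_sum fun f hf => (hs f hf).card_errRateFin_le_mul_le N hε
      _ < 2 ^ N * (4 * ε ^ 2 * N) := by
          rw [Finset.sum_const, nsmul_eq_mul, mul_comm]
          gcongr
  have hlt : #bad < #(Finset.univ : Finset (Fin N → Bool)) := by
    rw [Finset.card_univ, Fintype.card_fun, Fintype.card_bool, Fintype.card_fin]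
    exact_mod_cast lt_of_mul_lt_mul_right hbad (by positivity)
  obtain ⟨a, -, ha⟩ := Finset.exists_mem_notMem_of_card_lt_card hlt
  refine ⟨a, fun f hf => not_le.mp fun hle => ha ?_⟩
  exact Finset.mem_biUnion.mpr ⟨f, hf, Finset.mem_filter.mpr ⟨Finset.mem_univ _, hle⟩⟩

/-- For every cardinality bound `p` and every `ε > 0` there is an `N`, depending only on `p`
and `ε`, such that for every set of at most `p` causal predictors there is a binary sequence
of length `N` on which every predictor in the set has error rate greater than `1/2 − ε`. -/
theorem exists_hard_sequence_uniform (p : ℕ) (ε : ℝ) (hε : 0 < ε) :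
    ∃ N : ℕ, ∀ S : Set Predictor, S.Finite → Nat.card S ≤ p → (∀ f ∈ S, Causal f) →
      ∃ a : Fin N → Bool, ∀ f ∈ S, 1 / 2 - ε < errRateFin f a := by
  refine ⟨⌈p / (4 * ε ^ 2)⌉₊ + 1, fun S hS hcard hcausal => ?_⟩
  have hp : (p : ℝ) < 4 * ε ^ 2 * ↑(⌈p / (4 * ε ^ 2)⌉₊ + 1) := by
    rw [← div_lt_iff₀' (by positivity), Nat.cast_add_one]
    exact (Nat.le_ceil _).trans_lt (lt_add_one _)
  have hs : #hS.toFinset ≤ p := by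
    rwa [← Set.ncard_eq_toFinset_card S hS, ← Nat.card_coe_set_eq]
  obtain ⟨a, ha⟩ := exists_forall_lt_errRateFin (s := hS.toFinset)
    (fun f hf => hcausal f (hS.mem_toFinset.mp hf)) hε.le ((Nat.cast_le.mpr hs).trans_lt hp)
  exact ⟨a, fun f hf => ha f (hS.mem_toFinset.mpr hf)⟩
end
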